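/- There exists a real constant μ > 0 such that for every z₀ ∈ [0,1] there exists a constant C > 0 with the following property: for all i ∈ ℕ, ℙ{ Z_i ≤ 2^(−2^(0.49·i)) } ≥ (1 − z₀) − C·2^(−i/μ). -/

import Mathlib

/-!
Split the `n` steps into stages of lengths `8t`, `t` and `n - 9t`, where `t = ⌊n / 800⌋`.
`Z` is a martingale and `√(Z (1 - Z))` shrinks in expectation by the factor `√3 / 2` per step, so
by Markov's inequality `Z_{8t} ≤ 4^(-t)` except with probability `z₀ + O((3/4)^t)`.
While `Z ≤ 2^(2^c (e - j))`, a squaring doubles the exponent and the other step costs at most one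
unit of it. A Chernoff bound on the number `c` of squarings then shows that `11` squarings in the
next `t` steps bring `Z` below `2^(-2048 t)`, and `0.49 n` squarings in the last `n - 9t` steps
bring it below `2^(-2^(0.49 n))`, except with exponentially small probability.
Only the first `n` coins matter, and they are uniform on `Bool^n`, so every probability is an
average over `2^n` coin sequences.
-/

open MeasureTheory ProbabilityTheory

/-- `P` is the infinite product of fair Bernoulli(1/2) measures on `ℕ → Bool`:
the coordinate maps are i.i.d. fair coin flips under `P`. -/
def IsFairCoinMeasure (P : Measure (ℕ → Bool)) : Prop :=
  IsProbabilityMeasure P ∧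
  iIndepFun (fun i (ω : ℕ → Bool) => ω i) P ∧
  ∀ (i : ℕ) (b : Bool), P {ω | ω i = b} = 1/2

/-- The BEC polarization process with initial value `z₀`:
`Z_0 = z₀`, and `Z_{i+1} = Z_i²` if `ω i = true`, `Z_{i+1} = 2·Z_i − Z_i²` otherwise. -/
def Zproc (z₀ : ℝ) : ℕ → (ℕ → Bool) → ℝ
  | 0, _ => z₀
  | (i+1), ω => if ω i then (Zproc z₀ i ω)^2 else 2 * Zproc z₀ i ω - (Zproc z₀ i ω)^2

open Real Set

noncomputable section

section CoinWalk

variable {α β : Type*} (s : Bool → α → α)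

def coinExp : ℕ → α → (α → ℝ) → ℝ
  | 0, a, f => f a
  | n + 1, a, f => (coinExp n (s true a) f + coinExp n (s false a) f) / 2

theorem coinExp_const (c : ℝ) : ∀ n a, coinExp s n a (fun _ => c) = c
  | 0, _ => rfl
  | n + 1, a => by simp only [coinExp, coinExp_const c n]; ring

theorem coinExp_add (f g : α → ℝ) :
    ∀ n a, coinExp s n a (f + g) = coinExp s n a f + coinExp s n a g
  | 0, _ => rfl
  | n + 1, a => by simp only [coinExp, coinExp_add f g n]; ring

theorem coinExp_smul (c : ℝ) (f : α → ℝ) : ∀ n a, coinExp s n a (c • f) = c * coinExp s n a f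
  | 0, _ => rfl
  | n + 1, a => by simp only [coinExp, coinExp_smul c f n]; ring

theorem coinExp_indicator_compl (B : Set α) (n : ℕ) (a : α) :
    coinExp s n a (Bᶜ.indicator 1) = 1 - coinExp s n a (B.indicator 1) := by
  have := coinExp_add s (B.indicator 1) (Bᶜ.indicator 1) n a
  rw [indicator_self_add_compl] at this
  have : coinExp s n a 1 = 1 := coinExp_const s 1 n a
  linarith

theorem coinExp_add_steps (m k : ℕ) (f : α → ℝ) :
    ∀ a, coinExp s (m + k) a f = coinExp s m a (fun b => coinExp s k b f) := by
  induction m with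
  | zero => simp [coinExp]
  | succ m ih => intro a; rw [Nat.add_right_comm]; simp only [coinExp, ih]

theorem coinExp_comp {t : Bool → β → β} {p : β → α} (hp : ∀ b x, p (t b x) = s b (p x))
    (f : α → ℝ) : ∀ n x, coinExp t n x (f ∘ p) = coinExp s n (p x) f
  | 0, _ => rfl
  | n + 1, x => by simp only [coinExp, coinExp_comp hp f n, hp]

def withCount (b : Bool) (p : α × ℕ) : α × ℕ := (s b p.1, p.2 + b.toNat)

theorem coinExp_withCount_pow (q : ℝ) :
    ∀ n (p : α × ℕ), coinExp (withCount s) n p (fun p => q ^ p.2) = q ^ p.2 * ((1 + q) / 2) ^ n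
  | 0, _ => by simp [coinExp]
  | n + 1, p => by
    simp only [coinExp, coinExp_withCount_pow q n, withCount, Bool.toNat_true, Bool.toNat_false,
      add_zero, pow_succ]
    ring

theorem coinExp_withCount_fst (f : α → ℝ) (n : ℕ) (a : α) (c : ℕ) :
    coinExp (withCount s) n (a, c) (f ∘ Prod.fst) = coinExp s n a f :=
  coinExp_comp s (fun _ _ => rfl) f n (a, c)

def coinRun {n : ℕ} (a : α) (v : Fin n → Bool) : α := (List.ofFn v).foldl (fun x b => s b x) a

theorem coinRun_cons {n : ℕ} (a : α) (b : Bool) (v : Fin n → Bool) :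
    coinRun s a (Fin.cons b v : Fin (n + 1) → Bool) = coinRun s (s b a) v := by
  simp [coinRun, List.ofFn_succ]

theorem coinRun_succ (a : α) (n : ℕ) (ω : ℕ → Bool) :
    coinRun s a (fun j : Fin (n + 1) => ω j) = s (ω n) (coinRun s a (fun j : Fin n => ω j)) := by
  rw [coinRun, List.ofFn_succ']
  simp [coinRun]

theorem coinExp_eq_sum (f : α → ℝ) :
    ∀ n a, coinExp s n a f = (∑ v : Fin n → Bool, f (coinRun s a v)) / 2 ^ n
  | 0, a => by simp [coinExp, coinRun]
  | n + 1, a => by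
    rw [← (Fin.consEquiv fun _ => Bool).sum_comp, Fintype.sum_prod_type, Fintype.sum_bool]
    simp only [Fin.consEquiv, Equiv.coe_fn_mk, coinRun_cons, coinExp, coinExp_eq_sum f n, pow_succ]
    ring

variable {s} {f g : α → ℝ}

theorem coinExp_mono_of_invariant (I : ℕ → α → Prop) (hI : ∀ j a b, I (j + 1) a → I j (s b a))
    (hfg : ∀ a, I 0 a → f a ≤ g a) : ∀ n a, I n a → coinExp s n a f ≤ coinExp s n a g
  | 0, a, ha => hfg a ha
  | n + 1, a, ha => by
    have := coinExp_mono_of_invariant I hI hfg n _ (hI n a true ha)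
    have := coinExp_mono_of_invariant I hI hfg n _ (hI n a false ha)
    simp only [coinExp]
    linarith

theorem coinExp_mono_on {S : Set α} (hS : ∀ b, MapsTo (s b) S S) (hfg : ∀ a ∈ S, f a ≤ g a)
    (n : ℕ) {a : α} (ha : a ∈ S) : coinExp s n a f ≤ coinExp s n a g :=
  coinExp_mono_of_invariant (fun _ a => a ∈ S) (fun _ _ b ha => hS b ha) hfg n a ha

theorem coinExp_indicator_le_one (B : Set α) (n : ℕ) (a : α) :
    coinExp s n a (B.indicator 1) ≤ 1 :=
  (coinExp_mono_on (S := univ) (f := B.indicator 1) (g := fun _ => 1) (fun _ => mapsTo_univ _ _)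
    (fun _ _ => indicator_apply_le' (fun _ => le_rfl) (fun _ => zero_le_one)) n
    (mem_univ a)).trans_eq (coinExp_const s 1 n a)

theorem coinExp_indicator_add_steps_le {S G B : Set α} (hS : ∀ b, MapsTo (s b) S S) {k : ℕ}
    {ε : ℝ} (hε : 0 ≤ ε) (hB : ∀ a ∈ S, a ∉ G → coinExp s k a (B.indicator 1) ≤ ε) (m : ℕ)
    {a : α} (ha : a ∈ S) :
    coinExp s (m + k) a (B.indicator 1) ≤ coinExp s m a (G.indicator 1) + ε := by
  have := coinExp_mono_on hS (f := fun y => coinExp s k y (B.indicator 1))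
    (g := G.indicator 1 + fun _ => ε) (fun y hy => by
      by_cases hyG : y ∈ G
      · simp only [Pi.add_apply, indicator_of_mem hyG, Pi.one_apply]
        linarith [coinExp_indicator_le_one (s := s) B k y]
      · simpa [indicator_of_notMem hyG] using hB y hy hyG) m ha
  rwa [coinExp_add, coinExp_const, ← coinExp_add_steps] at this

end CoinWalk

theorem pow_div_le_pow_div_pow {ρ β : ℝ} {d : ℕ} (hd : 0 < d) (hρ : 0 ≤ ρ) (hβ0 : 0 < β)
    (hβ1 : β ≤ 1) (hρβ : ρ ≤ β ^ d) (n : ℕ) : ρ ^ (n / d) ≤ β ^ n / β ^ d := by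
  rw [le_div_iff₀ (pow_pos hβ0 d)]
  calc ρ ^ (n / d) * β ^ d ≤ (β ^ d) ^ (n / d) * β ^ d := by gcongr
    _ = β ^ (n / d * d + d) := by rw [← pow_mul, mul_comm d, pow_add]
    _ ≤ β ^ n := pow_le_pow_of_le_one hβ0.le hβ1 (Nat.lt_div_mul_add hd).le

theorem pow_mul_pow_le_mul_pow {p r β : ℝ} {d u v a k n : ℕ} (hd : d ≠ 0) (hp : 1 ≤ p)
    (hr0 : 0 ≤ r) (hr1 : r ≤ 1) (hβ : 0 ≤ β) (ha : d * a ≤ u * n + d) (hk : v * n ≤ d * k)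
    (h : p ^ u * r ^ v ≤ β ^ d) : p ^ a * r ^ k ≤ p * β ^ n := by
  refine le_of_pow_le_pow_left₀ hd (by positivity) ?_
  calc (p ^ a * r ^ k) ^ d = p ^ (d * a) * r ^ (d * k) := by ring
    _ ≤ p ^ (u * n + d) * r ^ (v * n) :=
        mul_le_mul (pow_le_pow_right₀ hp ha) (pow_le_pow_of_le_one hr0 hr1 hk) (by positivity)
          (by positivity)
    _ = p ^ d * (p ^ u * r ^ v) ^ n := by ring
    _ ≤ p ^ d * (β ^ d) ^ n := by gcongr
    _ = (p * β ^ n) ^ d := by ring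

def becStep (b : Bool) (z : ℝ) : ℝ := if b then z ^ 2 else 2 * z - z ^ 2

@[simp] theorem becStep_true (z : ℝ) : becStep true z = z ^ 2 := rfl

@[simp] theorem becStep_false (z : ℝ) : becStep false z = 2 * z - z ^ 2 := rfl

theorem Zproc_eq_coinRun (z₀ : ℝ) (n : ℕ) (ω : ℕ → Bool) :
    Zproc z₀ n ω = coinRun becStep z₀ (fun j : Fin n => ω j) := by
  induction n with
  | zero => rfl
  | succ n ih => rw [coinRun_succ, ← ih]; rfl

theorem IsFairCoinMeasure.measure_prefix_eq {P : Measure (ℕ → Bool)} (hP : IsFairCoinMeasure P)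
    (n : ℕ) (v : Fin n → Bool) : P {ω | (fun j : Fin n => ω j) = v} = (1 / 2) ^ n := by
  have hind : iIndepFun (fun (j : Fin n) (ω : ℕ → Bool) => ω j) P :=
    hP.2.1.precomp Fin.val_injective
  have hcyl : {ω : ℕ → Bool | (fun j : Fin n => ω j) = v}
      = ⋂ j ∈ (Finset.univ : Finset (Fin n)), (fun ω : ℕ → Bool => ω j) ⁻¹' {v j} := by
    ext ω; simp [funext_iff]
  rw [hcyl, hind.measure_inter_preimage_eq_mul _ (fun _ _ => MeasurableSet.of_discrete)]
  simp [preimage, hP.2.2]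

theorem IsFairCoinMeasure.toReal_measure_Zproc_mem {P : Measure (ℕ → Bool)}
    (hP : IsFairCoinMeasure P) (z₀ : ℝ) (n : ℕ) (B : Set ℝ) :
    (P {ω | Zproc z₀ n ω ∈ B}).toReal = coinExp becStep n z₀ (B.indicator 1) := by
  classical
  let A := Finset.univ.filter fun v : Fin n → Bool => coinRun becStep z₀ v ∈ B
  have hA : {ω | Zproc z₀ n ω ∈ B} = (fun ω (j : Fin n) => ω j) ⁻¹' A := by
    ext ω; simp [A, Zproc_eq_coinRun]
  rw [hA, ← sum_measure_preimage_singleton A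
    (fun _ _ => measurableSet_eq_fun (by fun_prop) (by fun_prop))]
  simp [preimage, hP.measure_prefix_eq, coinExp_eq_sum, indicator_apply, A, div_eq_mul_inv]

theorem becStep_mapsTo (b : Bool) : MapsTo (becStep b) (Icc 0 1) (Icc 0 1) := by
  rintro z ⟨h0, h1⟩
  cases b <;> simp only [becStep_true, becStep_false] <;> constructor <;> nlinarith

theorem coinExp_becStep_id : ∀ n z, coinExp becStep n z id = z
  | 0, _ => rfl
  | n + 1, z => by simp only [coinExp, coinExp_becStep_id n, becStep_true, becStep_false]; ring

theorem sqrt_add_sqrt_le_sqrt_three {z : ℝ} (h0 : 0 ≤ z) (h1 : z ≤ 1) :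
    √(z * (1 + z)) + √((1 - z) * (2 - z)) ≤ √3 := by
  have hA : 0 ≤ z * (1 + z) := by positivity
  have hB : 0 ≤ (1 - z) * (2 - z) := by nlinarith
  have hAB : √(z * (1 + z)) * √((1 - z) * (2 - z)) ≤ (1 + 2 * (z - z ^ 2)) / 2 := by
    rw [← Real.sqrt_mul hA]
    -- `z (1+z) (1-z) (2-z) = u (2 + u)` with `u = z (1 - z) ≤ 1/4`
    apply Real.sqrt_le_iff.mpr
    constructor
    · nlinarith
    · nlinarith [sq_nonneg (1 - 2 * z)]
  apply Real.le_sqrt_of_sq_le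
  nlinarith [Real.sq_sqrt hA, Real.sq_sqrt hB]

theorem coinExp_becStep_sqrt_le :
    ∀ n z, z ∈ Icc (0 : ℝ) 1 →
      coinExp becStep n z (fun y => √(y * (1 - y))) ≤ (√3 / 2) ^ n * √(z * (1 - z))
  | 0, _, _ => by simp [coinExp]
  | n + 1, z, hz => by
    have ih1 := coinExp_becStep_sqrt_le n _ (becStep_mapsTo true hz)
    have ih2 := coinExp_becStep_sqrt_le n _ (becStep_mapsTo false hz)
    have hu : 0 ≤ z * (1 - z) := mul_nonneg hz.1 (sub_nonneg.2 hz.2)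
    have hstep : √(z ^ 2 * (1 - z ^ 2)) + √((2 * z - z ^ 2) * (1 - (2 * z - z ^ 2)))
        ≤ √3 * √(z * (1 - z)) := by
      rw [show z ^ 2 * (1 - z ^ 2) = z * (1 - z) * (z * (1 + z)) by ring,
        show (2 * z - z ^ 2) * (1 - (2 * z - z ^ 2)) = z * (1 - z) * ((1 - z) * (2 - z)) by ring,
        Real.sqrt_mul hu, Real.sqrt_mul hu, ← mul_add, mul_comm √3]
      exact mul_le_mul_of_nonneg_left (sqrt_add_sqrt_le_sqrt_three hz.1 hz.2) (Real.sqrt_nonneg _)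
    simp only [coinExp, becStep_true, becStep_false] at ih1 ih2 ⊢
    calc _ ≤ ((√3 / 2) ^ n * √(z ^ 2 * (1 - z ^ 2))
            + (√3 / 2) ^ n * √((2 * z - z ^ 2) * (1 - (2 * z - z ^ 2)))) / 2 := by linarith
      _ ≤ (√3 / 2) ^ n * (√3 * √(z * (1 - z))) / 2 := by
          rw [← mul_add]; gcongr
      _ = (√3 / 2) ^ (n + 1) * √(z * (1 - z)) := by ring

theorem indicator_Ioi_le_of_mem_Icc {δ y : ℝ} (hδ0 : 0 < δ) (hδ1 : δ < 1)
    (hy : y ∈ Icc (0 : ℝ) 1) :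
    (Ioi δ).indicator 1 y ≤ (1 - δ)⁻¹ * y + (√(δ * (1 - δ)))⁻¹ * √(y * (1 - y)) := by
  have hs : 0 < √(δ * (1 - δ)) := Real.sqrt_pos.2 (by nlinarith)
  have h1 : 0 ≤ (1 - δ)⁻¹ * y := mul_nonneg (inv_nonneg.2 (by linarith)) hy.1
  have h2 : 0 ≤ (√(δ * (1 - δ)))⁻¹ * √(y * (1 - y)) := by positivity
  by_cases hδy : y ∈ Ioi δ
  · rw [indicator_of_mem hδy, Pi.one_apply]
    by_cases hy1 : 1 - δ ≤ y
    · have : 1 ≤ (1 - δ)⁻¹ * y := by rw [← div_eq_inv_mul, one_le_div (by linarith)]; exact hy1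
      linarith
    · have : √(δ * (1 - δ)) ≤ √(y * (1 - y)) := Real.sqrt_le_sqrt <| by
        have : y * (1 - y) - δ * (1 - δ) = (y - δ) * (1 - δ - y) := by ring
        nlinarith [mem_Ioi.1 hδy]
      have : 1 ≤ (√(δ * (1 - δ)))⁻¹ * √(y * (1 - y)) := by
        rw [← div_eq_inv_mul, one_le_div hs]; exact this
      linarith
  · rw [indicator_of_notMem hδy]
    positivity

theorem coinExp_becStep_indicator_Ioi_le (m : ℕ) {δ z : ℝ} (hδ0 : 0 < δ) (hδ : δ ≤ 1 / 2)
    (hz : z ∈ Icc (0 : ℝ) 1) :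
    coinExp becStep m z ((Ioi δ).indicator 1) ≤ z + 2 * δ + (√3 / 2) ^ m / √δ := by
  set s := √(δ * (1 - δ))
  have hs : 0 < s := Real.sqrt_pos.2 (by nlinarith)
  have hmono := coinExp_mono_on becStep_mapsTo
    (g := (1 - δ)⁻¹ • id + s⁻¹ • fun y => √(y * (1 - y)))
    (fun y hy => indicator_Ioi_le_of_mem_Icc hδ0 (by linarith) hy) m hz
  rw [coinExp_add, coinExp_smul, coinExp_smul, coinExp_becStep_id] at hmono
  have hmart : (1 - δ)⁻¹ * z ≤ z + 2 * δ := by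
    rw [← div_eq_inv_mul, div_le_iff₀ (by linarith)]
    nlinarith [hz.2]
  have hvar : s⁻¹ * √(z * (1 - z)) ≤ (√δ)⁻¹ := by
    rw [inv_mul_le_iff₀ hs, ← div_eq_mul_inv, le_div_iff₀ (Real.sqrt_pos.2 hδ0),
      ← Real.sqrt_mul (mul_nonneg hz.1 (sub_nonneg.2 hz.2))]
    exact Real.sqrt_le_sqrt (by nlinarith [sq_nonneg (2 * z - 1)])
  have hsup := coinExp_becStep_sqrt_le m z hz
  calc _ ≤ (1 - δ)⁻¹ * z + s⁻¹ * ((√3 / 2) ^ m * √(z * (1 - z))) := by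
        have := mul_le_mul_of_nonneg_left hsup (inv_nonneg.2 hs.le)
        linarith
    _ = (1 - δ)⁻¹ * z + (√3 / 2) ^ m * (s⁻¹ * √(z * (1 - z))) := by ring
    _ ≤ z + 2 * δ + (√3 / 2) ^ m * (√δ)⁻¹ := by gcongr
    _ = z + 2 * δ + (√3 / 2) ^ m / √δ := by rw [div_eq_mul_inv ((√3 / 2) ^ m)]

theorem withCount_becStep_le_rpow {e y : ℝ} {c : ℕ} (hy : 0 ≤ y)
    (hye : y ≤ (2 : ℝ) ^ (2 ^ c * (e - 1))) (b : Bool) :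
    (withCount becStep b (y, c)).1 ≤ (2 : ℝ) ^ (2 ^ (withCount becStep b (y, c)).2 * e) := by
  cases b
  · simp only [withCount, becStep_false, Bool.toNat_false, add_zero]
    calc 2 * y - y ^ 2 ≤ 2 * (2 : ℝ) ^ (2 ^ c * (e - 1)) := by nlinarith
      _ = (2 : ℝ) ^ (2 ^ c * (e - 1) + 1) := by rw [Real.rpow_add_one two_ne_zero, mul_comm]
      _ ≤ (2 : ℝ) ^ (2 ^ c * e) := by
          gcongr
          · norm_num
          · nlinarith [one_le_pow₀ (M₀ := ℝ) one_le_two (n := c)]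
  · simp only [withCount, becStep_true, Bool.toNat_true]
    calc y ^ 2 ≤ ((2 : ℝ) ^ (2 ^ c * (e - 1))) ^ 2 := by gcongr
      _ = (2 : ℝ) ^ (2 ^ (c + 1) * (e - 1)) := by
          rw [← Real.rpow_mul_natCast zero_le_two]; push_cast; ring_nf
      _ ≤ (2 : ℝ) ^ (2 ^ (c + 1) * e) := by gcongr <;> norm_num

/-- Reaching `Z > T` needs fewer than `a` squarings, while `q ^ (number of squarings)` has mean
`((1 + q) / 2) ^ L`. -/
theorem coinExp_becStep_indicator_Ioi_le_of_le_rpow (L a : ℕ) {e T q z : ℝ} (hq0 : 0 < q)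
    (hq1 : q ≤ 1) (he : e ≤ 0) (hT : (2 : ℝ) ^ (2 ^ a * e) ≤ T) (hz : z ∈ Icc (0 : ℝ) 1)
    (hze : z ≤ (2 : ℝ) ^ (e - L)) :
    coinExp becStep L z ((Ioi T).indicator 1) ≤ q⁻¹ ^ a * ((1 + q) / 2) ^ L := by
  let I : ℕ → ℝ × ℕ → Prop := fun j p => p.1 ∈ Icc (0 : ℝ) 1 ∧ p.1 ≤ 2 ^ (2 ^ p.2 * (e - j))
  have hI : ∀ j p b, I (j + 1) p → I j (withCount becStep b p) := by
    rintro j ⟨y, c⟩ b ⟨hy, hye⟩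
    refine ⟨becStep_mapsTo b hy, withCount_becStep_le_rpow hy.1 ?_ b⟩
    rwa [Nat.cast_succ, ← sub_sub] at hye
  have hend : ∀ p, I 0 p →
      ((Ioi T).indicator 1 ∘ Prod.fst) p ≤ (q⁻¹ ^ a • fun p => q ^ p.2) p := by
    rintro ⟨y, c⟩ ⟨-, hye⟩
    simp only [Function.comp_apply, Pi.smul_apply, smul_eq_mul]
    by_cases hca : a ≤ c
    · have hyT : y ≤ T := by
        refine hye.trans (le_trans ?_ hT)
        simp only [CharP.cast_eq_zero, sub_zero]
        exact Real.rpow_le_rpow_of_exponent_le one_le_two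
          (mul_le_mul_of_nonpos_right (pow_le_pow_right₀ one_le_two hca) he)
      rw [indicator_of_notMem (notMem_Ioi.2 hyT)]
      positivity
    · have : q ^ a ≤ q ^ c := pow_le_pow_of_le_one hq0.le hq1 (by omega)
      calc (Ioi T).indicator 1 y ≤ (1 : ℝ) :=
          indicator_apply_le' (fun _ => le_rfl) (fun _ => zero_le_one)
        _ ≤ q⁻¹ ^ a * q ^ c := by
          rwa [inv_pow, ← div_eq_inv_mul, one_le_div (by positivity)]
  have := coinExp_mono_of_invariant I hI hend L (z, 0) ⟨hz, by simpa using hze⟩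
  rwa [coinExp_withCount_fst, coinExp_smul, coinExp_withCount_pow, pow_zero, one_mul] at this

theorem coinExp_becStep_indicator_Ioi_le_of_le_quarter_pow {t k a : ℕ} {T z : ℝ}
    (hk : k + 1 ≤ 2048 * t) (hT : (2 : ℝ) ^ (-(2 : ℝ) ^ a) ≤ T) (hz : z ∈ Icc (0 : ℝ) 1)
    (hzt : z ≤ (1 / 4) ^ t) :
    coinExp becStep (t + k) z ((Ioi T).indicator 1)
      ≤ 2048 * (3 / 4) ^ t + (63 / 62) ^ a * (125 / 126) ^ k := by
  set T₂ : ℝ := (2 : ℝ) ^ (((k : ℝ) - 2048 * t) - k)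
  have hstage₃ : ∀ y ∈ Icc (0 : ℝ) 1, y ∉ Ioi T₂ →
      coinExp becStep k y ((Ioi T).indicator 1) ≤ (63 / 62) ^ a * (125 / 126) ^ k := by
    intro y hy hyT₂
    have he : (k : ℝ) - 2048 * t ≤ -1 := by
      have : ((k + 1 : ℕ) : ℝ) ≤ ((2048 * t : ℕ) : ℝ) := Nat.cast_le.2 hk
      push_cast at this
      linarith
    have := coinExp_becStep_indicator_Ioi_le_of_le_rpow k a (q := 62 / 63) (by norm_num)
      (by norm_num) (by linarith) (le_trans ?_ hT) hy (not_lt.1 hyT₂)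
    · exact this.trans_eq (by norm_num)
    · gcongr
      · norm_num
      · nlinarith [pow_pos (two_pos (α := ℝ)) a]
  have := coinExp_indicator_add_steps_le becStep_mapsTo (by positivity) hstage₃ t hz
  refine this.trans (add_le_add_left ?_ _)
  have := coinExp_becStep_indicator_Ioi_le_of_le_rpow t 11 (e := -t) (T := T₂) (q := 1 / 2)
    (by norm_num) (by norm_num) (by simp) (le_of_eq ?_) hz ?_
  · exact this.trans_eq (by norm_num)
  · congr 1; ring
  · convert hzt using 1
    rw [show -(t : ℝ) - t = -(2 * t : ℕ) by push_cast; ring, Real.rpow_neg zero_le_two,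
      Real.rpow_natCast, pow_mul, one_div, inv_pow]
    norm_num

theorem sqrt_three_div_two_pow_div_sqrt_quarter_pow (t : ℕ) :
    (√3 / 2) ^ (8 * t) / √((1 / 4 : ℝ) ^ t) = (81 / 128) ^ t := by
  rw [show (1 / 4 : ℝ) ^ t = ((1 / 2) ^ t) ^ 2 by rw [← pow_mul, mul_comm, pow_mul]; norm_num,
    Real.sqrt_sq (by positivity), pow_mul, ← div_pow]
  congr 1
  rw [div_pow, show √3 ^ 8 = (√3 ^ 2) ^ 4 by ring, Real.sq_sqrt zero_le_three]
  norm_num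

theorem coinExp_becStep_indicator_Ioi_two_rpow_le {n : ℕ} (hn : 800 ≤ n) {z : ℝ}
    (hz : z ∈ Icc (0 : ℝ) 1) :
    coinExp becStep n z ((Ioi ((2 : ℝ) ^ (-(2 : ℝ) ^ ((0.49 : ℝ) * n)))).indicator 1)
      ≤ z + 2051 * (3 / 4) ^ (n / 800)
        + (63 / 62) ^ ((49 * n + 99) / 100) * (125 / 126) ^ (n - 9 * (n / 800)) := by
  set t := n / 800
  have ht : 800 * t ≤ n ∧ n < 800 * t + 800 :=
    ⟨Nat.mul_div_le n 800, Nat.lt_mul_div_succ n (by norm_num)⟩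
  have hT : (2 : ℝ) ^ (-(2 : ℝ) ^ ((49 * n + 99) / 100))
      ≤ (2 : ℝ) ^ (-(2 : ℝ) ^ ((0.49 : ℝ) * n)) := by
    gcongr
    · norm_num
    rw [← Real.rpow_natCast]
    gcongr
    · norm_num
    have : (49 * n : ℝ) ≤ 100 * ((49 * n + 99) / 100 : ℕ) := by exact_mod_cast (by omega)
    linarith
  have := coinExp_indicator_add_steps_le becStep_mapsTo (G := Ioi ((1 / 4) ^ t)) (by positivity)
    (fun y hy hyδ => coinExp_becStep_indicator_Ioi_le_of_le_quarter_pow (t := t)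
      (k := n - 9 * t) (by omega) hT hy (not_lt.1 hyδ)) (8 * t) hz
  rw [show 8 * t + (t + (n - 9 * t)) = n by omega] at this
  have hstage₁ := coinExp_becStep_indicator_Ioi_le (8 * t) (δ := (1 / 4) ^ t) (by positivity)
    (by calc (1 / 4 : ℝ) ^ t ≤ 1 / 4 := pow_le_of_le_one (by norm_num) (by norm_num) (by omega)
          _ ≤ 1 / 2 := by norm_num) hz
  rw [sqrt_three_div_two_pow_div_sqrt_quarter_pow] at hstage₁
  have h₁ : (1 / 4 : ℝ) ^ t ≤ (3 / 4) ^ t := pow_le_pow_left₀ (by norm_num) (by norm_num) t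
  have h₂ : (81 / 128 : ℝ) ^ t ≤ (3 / 4) ^ t := pow_le_pow_left₀ (by norm_num) (by norm_num) t
  linarith

theorem coinExp_becStep_indicator_Ioi_two_rpow_le_pow {β : ℝ} (hβ0 : 0 < β) (hβ1 : β ≤ 1)
    (h₁ : 3 / 4 ≤ β ^ 800) (h₂ : (63 / 62 : ℝ) ^ 392 * (125 / 126) ^ 791 ≤ β ^ 800) {n : ℕ}
    (hn : 800 ≤ n) {z : ℝ} (hz : z ∈ Icc (0 : ℝ) 1) :
    coinExp becStep n z ((Ioi ((2 : ℝ) ^ (-(2 : ℝ) ^ ((0.49 : ℝ) * n)))).indicator 1)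
      ≤ z + (2051 / β ^ 800 + 63 / 62) * β ^ n := by
  have hquarter := pow_div_le_pow_div_pow (by norm_num) (by norm_num) hβ0 hβ1 h₁ n
  have hchernoff := pow_mul_pow_le_mul_pow (a := (49 * n + 99) / 100) (k := n - 9 * (n / 800))
    (n := n) (by norm_num) (by norm_num) (by norm_num) (by norm_num) hβ0.le (by omega) (by omega)
    h₂
  have := coinExp_becStep_indicator_Ioi_two_rpow_le hn hz
  have : (2051 / β ^ 800 + 63 / 62) * β ^ n = 2051 * (β ^ n / β ^ 800) + 63 / 62 * β ^ n := by
    ring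
  linarith

-- The exponents are split so that `norm_num` evaluates the powers.
theorem exists_rate : ∃ β : ℝ, 0 < β ∧ β < 1 ∧ 3 / 4 ≤ β ^ 800 ∧
    (63 / 62 : ℝ) ^ 392 * (125 / 126) ^ 791 ≤ β ^ 800 := by
  refine ⟨99999 / 100000, by norm_num, by norm_num, ?_, ?_⟩ <;>
    rw [show 800 = 200 * 4 from rfl, pow_mul]
  · norm_num
  · rw [show 392 = 196 * 2 from rfl, show 791 = 113 * 7 from rfl, pow_mul, pow_mul]
    norm_num

end

theorem stmt0 :
    ∃ μ : ℝ, 0 < μ ∧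
      ∀ z₀ ∈ Set.Icc (0:ℝ) 1, ∀ P : Measure (ℕ → Bool), IsFairCoinMeasure P →
        ∃ C : ℝ, 0 < C ∧ ∀ i : ℕ,
          (P {ω | Zproc z₀ i ω ≤ (2:ℝ) ^ (-(2:ℝ) ^ ((0.49:ℝ) * i))}).toReal
            ≥ (1 - z₀) - C * (2:ℝ) ^ (-(i:ℝ) / μ) := by
  obtain ⟨β, hβ0, hβ1, h₁, h₂⟩ := exists_rate
  have hlog : logb 2 β < 0 := Real.logb_neg one_lt_two hβ0 hβ1
  refine ⟨(-logb 2 β)⁻¹, inv_pos.2 (neg_pos.2 hlog), fun z₀ hz₀ P hP =>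
    ⟨2051 / β ^ 800 + 63 / 62, by positivity, fun i => ?_⟩⟩
  have hrate : (2 : ℝ) ^ (-(i : ℝ) / (-logb 2 β)⁻¹) = β ^ i := by
    rw [div_inv_eq_mul, neg_mul_neg, mul_comm, Real.rpow_mul zero_le_two,
      Real.rpow_logb two_pos one_lt_two.ne' hβ0, Real.rpow_natCast]
  rw [hrate, ge_iff_le]
  rcases lt_or_ge i 800 with hi | hi
  · refine le_trans ?_ ENNReal.toReal_nonneg
    have : β ^ 800 ≤ β ^ i := pow_le_pow_of_le_one hβ0.le hβ1.le hi.le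
    have : 1 ≤ 2051 / β ^ 800 * β ^ i := by
      rw [div_mul_eq_mul_div, le_div_iff₀ (by positivity)]; nlinarith
    nlinarith [hz₀.1, pow_pos hβ0 i]
  · have hcompl : {ω | Zproc z₀ i ω ≤ (2 : ℝ) ^ (-(2 : ℝ) ^ ((0.49 : ℝ) * i))}
        = {ω | Zproc z₀ i ω ∈ (Ioi ((2 : ℝ) ^ (-(2 : ℝ) ^ ((0.49 : ℝ) * i))))ᶜ} := by
      ext; simp
    rw [hcompl, hP.toReal_measure_Zproc_mem, coinExp_indicator_compl]
    linarith [coinExp_becStep_indicator_Ioi_two_rpow_le_pow hβ0 hβ1.le h₁ h₂ hi hz₀]
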